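/- arXiv:2411.00905 — 2 statements merged into one kernel-verified Lean document; each statement's English description precedes it below -/
import Mathlib

section
/- Let G be a finite group, Ĝ a complete set of pairwise inequivalent irreducible complex matrix representations of G, S a finite set, and A : G → ℂ^{S×S} a convolution kernel. Fix σ ∈ Ĝ of degree d_σ, an index j ∈ {1,…,d_σ}, and a vector ξ ∈ ℂ^{S×{1,…,d_σ}} with F(A)(σ) ξ = λ ξ for some λ ∈ ℂ. Define v : G → ℂ^S by v_s(g) := (d_σ/|G|) ∑_{i=1}^{d_σ} σ(g⁻¹)_{j,i} ξ_{(s,i)}. Then A * v = λ v, and v ≠ 0 whenever ξ ≠ 0. -/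
/-- A matrix representation of `G`: every `ρ g` is invertible and `ρ` is
multiplicative. -/
def IsMatRep {G : Type*} [Group G] {n : Type*} [Fintype n] [DecidableEq n]
    (ρ : G → Matrix n n ℂ) : Prop :=
  (∀ g, IsUnit (ρ g)) ∧ ∀ g h : G, ρ (g * h) = ρ g * ρ h

/-- Irreducibility: the only subspaces of `ℂ^n` invariant under all `ρ g` are
`⊥` and `⊤`. -/
def IsIrredRep {G : Type*} [Group G] {n : Type*} [Fintype n] [DecidableEq n]
    (ρ : G → Matrix n n ℂ) : Prop :=
  ∀ W : Submodule ℂ (n → ℂ), (∀ g : G, ∀ x ∈ W, (ρ g).mulVec x ∈ W) → W = ⊥ ∨ W = ⊤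

/-- Equivalence of matrix representations: `ρ(g) = T⁻¹ σ(g) T` for a fixed
invertible `T` (encoded by a two-sided inverse pair `T, T'`). -/
def RepEquiv {G : Type*} [Group G] {n m : Type*} [Fintype n] [DecidableEq n]
    [Fintype m] [DecidableEq m]
    (ρ : G → Matrix n n ℂ) (σ : G → Matrix m m ℂ) : Prop :=
  ∃ (T : Matrix m n ℂ) (T' : Matrix n m ℂ),
    T * T' = 1 ∧ T' * T = 1 ∧ ∀ g : G, ρ g = T' * σ g * T


/-- The group convolution of a kernel `A : G → ℂ^{S×S}` with `u : G → ℂ^S`: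
`(A*u)(g) = ∑_{h∈G} A(h) u(h⁻¹ g)`. -/
noncomputable def groupConv {G : Type*} [Group G] [Fintype G] {S : Type*} [Fintype S]
    (A : G → Matrix S S ℂ) (u : G → S → ℂ) : G → S → ℂ :=
  fun g s => ∑ h : G, ∑ s' : S, A h s s' * u (h⁻¹ * g) s'

/-- The (blockwise) generalized Fourier transform of a kernel `A : G → ℂ^{S×S}`
at a representation `σ` of degree `k`: the `|S|k × |S|k` matrix with entries
`F(A)_{(s,i),(s',j)}(σ) = (F(A_{s,s'}))_{i,j}(σ)`. -/
noncomputable def kernelFT {G : Type*} [Group G] [Fintype G] {S : Type*} [Fintype S] {k : ℕ}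
    (A : G → Matrix S S ℂ) (σ : G → Matrix (Fin k) (Fin k) ℂ) :
    Matrix (S × Fin k) (S × Fin k) ℂ :=
  Matrix.of fun p q => ∑ g : G, A g p.1 q.1 * σ g p.2 q.2

theorem sum4 {α β γ δ M : Type*} [AddCommMonoid M] [Fintype α][Fintype β][Fintype γ][Fintype δ]
    (f : α → β → γ → δ → M) :
    ∑ a, ∑ b, ∑ c, ∑ e, f a b c e = ∑ e, ∑ a, ∑ b, ∑ c, f a b c e :=
  calc ∑ a, ∑ b, ∑ c, ∑ e, f a b c e
      = ∑ a, ∑ b, ∑ e, ∑ c, f a b c e :=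
        Finset.sum_congr rfl fun _ _ => Finset.sum_congr rfl fun _ _ => Finset.sum_comm
    _ = ∑ a, ∑ e, ∑ b, ∑ c, f a b c e :=
        Finset.sum_congr rfl fun _ _ => Finset.sum_comm
    _ = ∑ e, ∑ a, ∑ b, ∑ c, f a b c e := Finset.sum_comm

theorem stmt10' {G : Type*} [Group G] [Fintype G]
    {ι : Type*} [Fintype ι] (d : ι → ℕ)
    (ρ : (i : ι) → G → Matrix (Fin (d i)) (Fin (d i)) ℂ)
    (hrep : ∀ i, IsMatRep (ρ i))
    (hirr : ∀ i, IsIrredRep (ρ i))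
    {S : Type*} [Fintype S] (A : G → Matrix S S ℂ) (lam : ℂ)
    (i : ι) (j : Fin (d i)) (ξ : S × Fin (d i) → ℂ)
    (heig : (kernelFT A (ρ i)).mulVec ξ = lam • ξ)
    (v : G → S → ℂ)
    (hv : v = fun g s =>
      ((d i : ℂ) / (Fintype.card G : ℂ)) * ∑ k : Fin (d i), ρ i g⁻¹ j k * ξ (s, k)) :
    groupConv A v = lam • v ∧ (ξ ≠ 0 → v ≠ 0) := by
  set c : ℂ := (d i : ℂ) / (Fintype.card G : ℂ) with hc
  have key : ∀ s m, (∑ h : G, ∑ s' : S, ∑ k : Fin (d i), A h s s' * ρ i h m k * ξ (s',k))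
      = lam * ξ (s,m) := by
    intro s m
    have := congrFun heig (s, m)
    simp only [Matrix.mulVec, dotProduct, kernelFT, Matrix.of_apply,
      Fintype.sum_prod_type, Pi.smul_apply, smul_eq_mul, Finset.sum_mul] at this
    rw [← this, Finset.sum_comm]
    exact Finset.sum_congr rfl fun s' _ => Finset.sum_comm
  constructor
  · funext g s
    show (∑ h : G, ∑ s' : S, A h s s' * v (h⁻¹ * g) s') = lam * v g s
    have step : ∀ h : G, ∀ s' : S, v (h⁻¹ * g) s'
        = c * ∑ k : Fin (d i), ∑ m : Fin (d i), ρ i g⁻¹ j m * ρ i h m k * ξ (s', k) := by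
      intro h s'
      rw [hv]
      simp only
      congr 1
      refine Finset.sum_congr rfl fun k _ => ?_
      have : (h⁻¹ * g)⁻¹ = g⁻¹ * h := by group
      rw [this, (hrep i).2, Matrix.mul_apply, Finset.sum_mul]
    simp only [step]
    calc (∑ h : G, ∑ s' : S, A h s s' *
            (c * ∑ k : Fin (d i), ∑ m : Fin (d i), ρ i g⁻¹ j m * ρ i h m k * ξ (s', k)))
        = ∑ h : G, ∑ s' : S, ∑ k : Fin (d i), ∑ m : Fin (d i),
            c * (ρ i g⁻¹ j m * (A h s s' * ρ i h m k * ξ (s', k))) := by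
          refine Finset.sum_congr rfl fun h _ => Finset.sum_congr rfl fun s' _ => ?_
          simp only [Finset.mul_sum]
          refine Finset.sum_congr rfl fun k _ => Finset.sum_congr rfl fun m _ => ?_
          ring
      _ = ∑ m : Fin (d i), ∑ h : G, ∑ s' : S, ∑ k : Fin (d i),
            c * (ρ i g⁻¹ j m * (A h s s' * ρ i h m k * ξ (s', k))) := sum4 _
      _ = ∑ m : Fin (d i), c * (ρ i g⁻¹ j m *
            ∑ h : G, ∑ s' : S, ∑ k : Fin (d i), A h s s' * ρ i h m k * ξ (s', k)) := by
          refine Finset.sum_congr rfl fun m _ => ?_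
          simp only [Finset.mul_sum]
      _ = lam * v g s := by
          simp only [key, hv]
          simp only [Finset.mul_sum]
          refine Finset.sum_congr rfl fun m _ => ?_
          ring
  · intro hξ hv0
    obtain ⟨⟨s, k0⟩, hξ0⟩ : ∃ p, ξ p ≠ 0 := by
      by_contra h
      push_neg at h
      exact hξ (funext h)
    have hd : (0 : ℕ) < d i := k0.pos
    have hcne : c ≠ 0 := by
      rw [hc]
      apply div_ne_zero
      · exact_mod_cast hd.ne'
      · exact_mod_cast (Fintype.card_pos (α := G)).ne'
    set x : Fin (d i) → ℂ := fun k => ξ (s, k) with hx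
    have hrow : ∀ g : G, ∑ k, ρ i g j k * x k = 0 := by
      intro g
      have := congrFun (congrFun hv0 g⁻¹) s
      rw [hv] at this
      simp only [inv_inv, Pi.zero_apply] at this
      exact (mul_eq_zero.mp this).resolve_left hcne
    have hone : ρ i 1 = 1 := by
      have h1 := (hrep i).2 1 1
      rw [mul_one] at h1
      have := (hrep i).1 1
      calc ρ i 1 = 1 * ρ i 1 := (one_mul _).symm
        _ = 1 := by
          obtain ⟨u, hu⟩ := this
          have : (↑u⁻¹ : Matrix _ _ ℂ) * ρ i 1 = 1 := by rw [← hu]; exact u.inv_mul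
          calc (1 : Matrix _ _ ℂ) * ρ i 1 = (↑u⁻¹ * ρ i 1) * ρ i 1 := by rw [this]
            _ = ↑u⁻¹ * ρ i 1 := by rw [mul_assoc, ← h1]
            _ = 1 := this
    set W : Submodule ℂ (Fin (d i) → ℂ) :=
      Submodule.span ℂ (Set.range fun g => (ρ i g).mulVec x) with hW
    have hinv : ∀ g : G, ∀ y ∈ W, (ρ i g).mulVec y ∈ W := by
      intro g y hy
      have : W.map (Matrix.mulVecLin (ρ i g)) ≤ W := by
        rw [hW, Submodule.map_span, Submodule.span_le]
        rintro _ ⟨_, ⟨h, rfl⟩, rfl⟩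
        apply Submodule.subset_span
        exact ⟨g * h, by simp [Matrix.mulVecLin_apply, Matrix.mulVec_mulVec, (hrep i).2]⟩
      exact this ⟨y, hy, rfl⟩
    have hxW : x ∈ W := by
      apply Submodule.subset_span
      exact ⟨1, by show (ρ i 1).mulVec x = x; rw [hone, Matrix.one_mulVec]⟩
    have hxne : x ≠ 0 := fun h => hξ0 (by rw [hx] at h; exact congrFun h k0)
    rcases hirr i W hinv with hbot | htop
    · rw [hbot] at hxW
      exact hxne (Submodule.mem_bot ℂ |>.mp hxW)
    · have hle : W ≤ LinearMap.ker (LinearMap.proj j : (Fin (d i) → ℂ) →ₗ[ℂ] ℂ) := by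
        rw [hW, Submodule.span_le]
        rintro _ ⟨g, rfl⟩
        simp only [SetLike.mem_coe, LinearMap.mem_ker, LinearMap.proj_apply]
        exact hrow g
      have : (Pi.single j 1 : Fin (d i) → ℂ) ∈ W := htop ▸ Submodule.mem_top
      have := hle this
      simp only [LinearMap.mem_ker, LinearMap.proj_apply, Pi.single_eq_same] at this
      exact one_ne_zero this

/-- Let `(ρ i)_{i : ι}` be a complete set of pairwise inequivalent
irreducible complex matrix representations of the finite group `G`, `S` a finite set,
and `A : G → ℂ^{S×S}` a convolution kernel.  Fix `i`, an index `j`, and a vector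
`ξ : ℂ^{S×Fin (d i)}` with `F(A)(ρ i) ξ = λ ξ`.  Define `v : G → ℂ^S` by
`v_s(g) := (d i / |G|) ∑_k (ρ i g⁻¹)_{j,k} ξ_{(s,k)}`.  Then `A * v = λ v`,
and `v ≠ 0` whenever `ξ ≠ 0`. -/
theorem stmt10 {G : Type*} [Group G] [Fintype G]
    {ι : Type*} [Fintype ι] (d : ι → ℕ)
    (ρ : (i : ι) → G → Matrix (Fin (d i)) (Fin (d i)) ℂ)
    (hrep : ∀ i, IsMatRep (ρ i))
    (hirr : ∀ i, IsIrredRep (ρ i))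
    (hineq : ∀ i j, i ≠ j → ¬ RepEquiv (ρ i) (ρ j))
    (hcomplete : ∀ (k : ℕ) (σ : G → Matrix (Fin k) (Fin k) ℂ),
      IsMatRep σ → IsIrredRep σ → ∃! i : ι, RepEquiv σ (ρ i))
    {S : Type*} [Fintype S] (A : G → Matrix S S ℂ) (lam : ℂ)
    (i : ι) (j : Fin (d i)) (ξ : S × Fin (d i) → ℂ)
    (heig : (kernelFT A (ρ i)).mulVec ξ = lam • ξ)
    (v : G → S → ℂ)
    (hv : v = fun g s =>
      ((d i : ℂ) / (Fintype.card G : ℂ)) * ∑ k : Fin (d i), ρ i g⁻¹ j k * ξ (s, k)) :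
    groupConv A v = lam • v ∧ (ξ ≠ 0 → v ≠ 0) :=
  stmt10' d ρ hrep hirr A lam i j ξ heig v hv
end

section
/- Let (Y, Σ, P) be a probability space, G a finite group, O a finite set, Φ : Y → Y measurable, and ψ : Y → ℂ^O measurable with each ψ_o and ψ_o ∘ Φ square-integrable with respect to P. Assume (A1) G acts measurably on Y from the left and freely on O from the right; (A2) ψ_o(g·y) = ψ_{o·g}(y) for all g, o, y; (A3) Φ(g·y) = g·Φ(y) for all g, y; (A4) the pushforward of P under y ↦ g·y equals P for all g ∈ G. If the loss ℓ(K) := ∫_Y ‖K ψ(y) − ψ(Φ(y))‖² dP(y) attains its minimum over ℂ^{O×O} at some matrix, then it attains its minimum at an equivariant matrix; in particular, if the minimizer is unique, it is equivariant. -/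
/-!
By (A2)–(A4) and a change of variables `y ↦ g·y`, the loss is invariant under
`K ↦ (K_{o·g, o'·g})`. The loss is also convex in `K`, so by Jensen the average of these
conjugates of a minimizer is again a minimizer, and it is equivariant. A unique minimizer
coincides with each of its conjugates.
-/

open MeasureTheory

noncomputable def edmdLoss {Y O : Type*} [MeasurableSpace Y] [Fintype O]
    (P : Measure Y) (Φ : Y → Y) (ψ : Y → O → ℂ) (K : Matrix O O ℂ) : ℝ :=
  ∫ y, ∑ o : O, ‖K.mulVec (ψ y) o - ψ (Φ y) o‖ ^ 2 ∂P

open Set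
open scoped Matrix

section Convexity

variable {E Y : Type*} [AddCommGroup E] [Module ℝ E] [MeasurableSpace Y] {P : Measure Y}

theorem convexOn_integral {s : Set E} (hs : Convex ℝ s) {F : E → Y → ℝ}
    (hF : ∀ y, ConvexOn ℝ s (F · y)) (hint : ∀ x ∈ s, Integrable (F x) P) :
    ConvexOn ℝ s fun x => ∫ y, F x y ∂P := by
  refine ⟨hs, fun x hx z hz a b ha hb hab => ?_⟩
  have hax : Integrable (fun y => a • F x y) P := (hint x hx).smul a
  have hbz : Integrable (fun y => b • F z y) P := (hint z hz).smul b
  calc ∫ y, F (a • x + b • z) y ∂P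
      ≤ ∫ y, a • F x y + b • F z y ∂P :=
        integral_mono (hint _ (hs hx hz ha hb hab)) (hax.add hbz)
          fun y => (hF y).2 hx hz ha hb hab
    _ = a • ∫ y, F x y ∂P + b • ∫ y, F z y ∂P := by
        rw [integral_add hax hbz, integral_smul, integral_smul]

end Convexity

section EDMD

variable {Y O : Type*} [Fintype O] (Φ : Y → Y) (ψ : Y → O → ℂ)

noncomputable def edmdIntegrand (K : Matrix O O ℂ) (y : Y) : ℝ :=
  ∑ o, ‖(K *ᵥ ψ y) o - ψ (Φ y) o‖ ^ 2

theorem convexOn_edmdIntegrand (y : Y) : ConvexOn ℝ univ (edmdIntegrand Φ ψ · y) := by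
  have hsq : ConvexOn ℝ univ fun z : ℂ => ‖z‖ ^ 2 :=
    convexOn_univ_norm.pow (fun _ _ => norm_nonneg _) 2
  refine ⟨convex_univ, fun K _ L _ a b ha hb hab => ?_⟩
  have hres : ∀ o, ((a • K + b • L) *ᵥ ψ y) o - ψ (Φ y) o =
      a • ((K *ᵥ ψ y) o - ψ (Φ y) o) + b • ((L *ᵥ ψ y) o - ψ (Φ y) o) := by
    intro o
    have hab' : (a : ℂ) + b = 1 := by exact_mod_cast hab
    simp only [Matrix.add_mulVec, Matrix.smul_mulVec, Pi.add_apply, Pi.smul_apply,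
      Complex.real_smul]
    linear_combination ψ (Φ y) o * hab'
  calc edmdIntegrand Φ ψ (a • K + b • L) y
      ≤ ∑ o, (a • ‖(K *ᵥ ψ y) o - ψ (Φ y) o‖ ^ 2 + b • ‖(L *ᵥ ψ y) o - ψ (Φ y) o‖ ^ 2) :=
        Finset.sum_le_sum fun o _ => by
          rw [hres]; exact hsq.2 trivial trivial ha hb hab
    _ = a • edmdIntegrand Φ ψ K y + b • edmdIntegrand Φ ψ L y := by
        simp only [edmdIntegrand, Finset.sum_add_distrib, Finset.smul_sum]

variable {Φ ψ}

theorem edmdIntegrand_submatrix (σ : O ≃ O) {T : Y → Y} (hψT : ∀ y, ψ (T y) = ψ y ∘ σ)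
    (hΦT : ∀ y, Φ (T y) = T (Φ y)) (K : Matrix O O ℂ) (y : Y) :
    edmdIntegrand Φ ψ (K.submatrix σ σ) (T y) = edmdIntegrand Φ ψ K y := by
  simp only [edmdIntegrand, hΦT, hψT, Matrix.submatrix_mulVec_equiv, Function.comp_assoc,
    Equiv.self_comp_symm, Function.comp_apply]
  exact Equiv.sum_comp σ fun o => ‖(K *ᵥ ψ y) o - ψ (Φ y) o‖ ^ 2

variable [MeasurableSpace Y] {P : Measure Y}

theorem edmdLoss_eq_integral (K : Matrix O O ℂ) :
    edmdLoss P Φ ψ K = ∫ y, edmdIntegrand Φ ψ K y ∂P :=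
  rfl

theorem integrable_edmdIntegrand (hψ : ∀ o, MemLp (ψ · o) 2 P)
    (hψΦ : ∀ o, MemLp (fun y => ψ (Φ y) o) 2 P) (K : Matrix O O ℂ) :
    Integrable (edmdIntegrand Φ ψ K) P := by
  refine integrable_finsetSum _ fun o _ => ?_
  have hKψ : MemLp (fun y => (K *ᵥ ψ y) o) 2 P :=
    memLp_finsetSum _ fun o' _ => (hψ o').const_mul (K o o')
  exact (hKψ.sub (hψΦ o)).norm.integrable_sq

theorem convexOn_edmdLoss (hψ : ∀ o, MemLp (ψ · o) 2 P)
    (hψΦ : ∀ o, MemLp (fun y => ψ (Φ y) o) 2 P) :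
    ConvexOn ℝ univ (edmdLoss P Φ ψ) :=
  convexOn_integral convex_univ (convexOn_edmdIntegrand Φ ψ)
    fun K _ => integrable_edmdIntegrand hψ hψΦ K

theorem edmdLoss_submatrix (hψ : ∀ o, MemLp (ψ · o) 2 P)
    (hψΦ : ∀ o, MemLp (fun y => ψ (Φ y) o) 2 P) (σ : O ≃ O) {T : Y → Y}
    (hT : MeasurePreserving T P P) (hψT : ∀ y, ψ (T y) = ψ y ∘ σ)
    (hΦT : ∀ y, Φ (T y) = T (Φ y)) (K : Matrix O O ℂ) :
    edmdLoss P Φ ψ (K.submatrix σ σ) = edmdLoss P Φ ψ K := by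
  have hmeas := (integrable_edmdIntegrand hψ hψΦ (K.submatrix σ σ)).aestronglyMeasurable
  rw [← hT.map_eq] at hmeas
  calc edmdLoss P Φ ψ (K.submatrix σ σ)
      = ∫ y, edmdIntegrand Φ ψ (K.submatrix σ σ) y ∂(P.map T) := by
        rw [hT.map_eq, edmdLoss_eq_integral]
    _ = ∫ y, edmdIntegrand Φ ψ (K.submatrix σ σ) (T y) ∂P :=
        integral_map hT.measurable.aemeasurable hmeas
    _ = edmdLoss P Φ ψ K := by
        simp only [edmdIntegrand_submatrix σ hψT hΦT, edmdLoss_eq_integral]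

end EDMD

section Averaging

variable {G O α : Type*} [Group G] [Fintype G] [AddCommGroup α] [Module ℝ α]

def rightActEquiv (act : O → G → O) (h1 : ∀ o, act o 1 = o)
    (h2 : ∀ o g h, act (act o g) h = act o (g * h)) (g : G) : O ≃ O where
  toFun o := act o g
  invFun o := act o g⁻¹
  left_inv o := by simp only [h2, mul_inv_cancel, h1]
  right_inv o := by simp only [h2, inv_mul_cancel, h1]

noncomputable def submatrixAverage (ρ : G → O ≃ O) (K : Matrix O O α) : Matrix O O α :=
  (Fintype.card G : ℝ)⁻¹ • ∑ g, K.submatrix (ρ g) (ρ g)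

theorem submatrixAverage_submatrix {ρ : G → O ≃ O}
    (hρ : ∀ g h, ρ (h * g) = (ρ h).trans (ρ g)) (K : Matrix O O α) (h : G) :
    (submatrixAverage ρ K).submatrix (ρ h) (ρ h) = submatrixAverage ρ K := by
  ext o o'
  simp only [submatrixAverage, Matrix.submatrix_apply, Matrix.smul_apply, Matrix.sum_apply]
  congr 1
  refine Fintype.sum_equiv (Equiv.mulLeft h) _ _ fun g => ?_
  simp [hρ]

theorem ConvexOn.map_submatrixAverage_le {f : Matrix O O α → ℝ} (hf : ConvexOn ℝ univ f)
    (ρ : G → O ≃ O) {K : Matrix O O α} (hK : ∀ g, f (K.submatrix (ρ g) (ρ g)) = f K) :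
    f (submatrixAverage ρ K) ≤ f K := by
  have hcard : (0 : ℝ) < Fintype.card G := Nat.cast_pos.2 Fintype.card_pos
  have hw : ∑ _g : G, (Fintype.card G : ℝ)⁻¹ = 1 := by
    rw [Finset.sum_const, Finset.card_univ, nsmul_eq_mul, mul_inv_cancel₀ hcard.ne']
  calc f (submatrixAverage ρ K)
      = f (∑ g, (Fintype.card G : ℝ)⁻¹ • K.submatrix (ρ g) (ρ g)) := by
        rw [submatrixAverage, Finset.smul_sum]
    _ ≤ ∑ g, (Fintype.card G : ℝ)⁻¹ • f (K.submatrix (ρ g) (ρ g)) :=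
        hf.map_sum_le (fun _ _ => inv_nonneg.2 hcard.le) hw fun _ _ => trivial
    _ = f K := by simp only [hK, ← Finset.sum_smul, hw, one_smul]

end Averaging

theorem stmt13_general {Y : Type*} [MeasurableSpace Y] (P : Measure Y)
    {G : Type*} [Group G] [Fintype G]
    {O : Type*} [Fintype O]
    (actY : G → Y → Y)
    (hYmeas : ∀ g, Measurable (actY g))
    (actO : O → G → O)
    (hO1 : ∀ o, actO o 1 = o)
    (hO2 : ∀ o g h, actO (actO o g) h = actO o (g * h))
    (Φ : Y → Y)
    (ψ : Y → O → ℂ)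
    (hψL2 : ∀ o, MemLp (fun y => ψ y o) 2 P)
    (hψΦL2 : ∀ o, MemLp (fun y => ψ (Φ y) o) 2 P)
    (hA2 : ∀ g o y, ψ (actY g y) o = ψ y (actO o g))
    (hA3 : ∀ g y, Φ (actY g y) = actY g (Φ y))
    (hA4 : ∀ g, Measure.map (actY g) P = P) :
    ((∃ K : Matrix O O ℂ, ∀ K₁ : Matrix O O ℂ, edmdLoss P Φ ψ K ≤ edmdLoss P Φ ψ K₁) →
      ∃ K' : Matrix O O ℂ,
        (∀ (g : G) (o o' : O), K' o o' = K' (actO o g) (actO o' g)) ∧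
        ∀ K₁ : Matrix O O ℂ, edmdLoss P Φ ψ K' ≤ edmdLoss P Φ ψ K₁) ∧
    (∀ K : Matrix O O ℂ,
      (∀ K₁ : Matrix O O ℂ, edmdLoss P Φ ψ K ≤ edmdLoss P Φ ψ K₁) →
      (∀ K₁ : Matrix O O ℂ,
        (∀ K₂ : Matrix O O ℂ, edmdLoss P Φ ψ K₁ ≤ edmdLoss P Φ ψ K₂) → K₁ = K) →
      ∀ (g : G) (o o' : O), K o o' = K (actO o g) (actO o' g)) := by
  set ρ := rightActEquiv actO hO1 hO2
  have hρ : ∀ g h, ρ (h * g) = (ρ h).trans (ρ g) := fun g h =>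
    Equiv.ext fun o => (hO2 o h g).symm
  have hinv : ∀ g K, edmdLoss P Φ ψ (K.submatrix (ρ g) (ρ g)) = edmdLoss P Φ ψ K := fun g =>
    edmdLoss_submatrix hψL2 hψΦL2 (ρ g) ⟨hYmeas g, hA4 g⟩
      (fun y => funext fun o => hA2 g o y) (hA3 g)
  refine ⟨fun ⟨K, hK⟩ => ⟨submatrixAverage ρ K, fun g o o' => ?_, fun K₁ => ?_⟩,
    fun K hmin huniq g o o' => ?_⟩
  · exact (congr_fun₂ (submatrixAverage_submatrix hρ K g) o o').symm
  · exact ((convexOn_edmdLoss hψL2 hψΦL2).map_submatrixAverage_le ρ (hinv · K)).trans (hK K₁)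
  · have hK : K.submatrix (ρ g) (ρ g) = K := huniq _ fun K₂ => (hinv g K).trans_le (hmin K₂)
    exact (congr_fun₂ hK o o').symm

/-- Under assumptions (A1)–(A4) (as in Statement 12), if the EDMD
loss `ℓ(K) = ∫ ‖K ψ(y) − ψ(Φ(y))‖² dP(y)` attains its minimum over `ℂ^{O×O}` at some
matrix, then it attains its minimum at an equivariant matrix; in particular, if the
minimizer is unique, it is equivariant. -/
theorem stmt13 {Y : Type*} [MeasurableSpace Y] (P : Measure Y) [IsProbabilityMeasure P]
    {G : Type*} [Group G] [Fintype G]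
    {O : Type*} [Fintype O]
    (actY : G → Y → Y)
    (hY1 : ∀ y, actY 1 y = y)
    (hY2 : ∀ g h y, actY g (actY h y) = actY (g * h) y)
    (hYmeas : ∀ g, Measurable (actY g))
    (actO : O → G → O)
    (hO1 : ∀ o, actO o 1 = o)
    (hO2 : ∀ o g h, actO (actO o g) h = actO o (g * h))
    (hOfree : ∀ o g, actO o g = o → g = 1)
    (Φ : Y → Y) (hΦmeas : Measurable Φ)
    (ψ : Y → O → ℂ)
    (hψmeas : ∀ o, Measurable fun y => ψ y o)
    (hψL2 : ∀ o, MemLp (fun y => ψ y o) 2 P)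
    (hψΦL2 : ∀ o, MemLp (fun y => ψ (Φ y) o) 2 P)
    (hA2 : ∀ g o y, ψ (actY g y) o = ψ y (actO o g))
    (hA3 : ∀ g y, Φ (actY g y) = actY g (Φ y))
    (hA4 : ∀ g, Measure.map (actY g) P = P) :
    ((∃ K : Matrix O O ℂ, ∀ K₁ : Matrix O O ℂ, edmdLoss P Φ ψ K ≤ edmdLoss P Φ ψ K₁) →
      ∃ K' : Matrix O O ℂ,
        (∀ (g : G) (o o' : O), K' o o' = K' (actO o g) (actO o' g)) ∧
        ∀ K₁ : Matrix O O ℂ, edmdLoss P Φ ψ K' ≤ edmdLoss P Φ ψ K₁) ∧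
    (∀ K : Matrix O O ℂ,
      (∀ K₁ : Matrix O O ℂ, edmdLoss P Φ ψ K ≤ edmdLoss P Φ ψ K₁) →
      (∀ K₁ : Matrix O O ℂ,
        (∀ K₂ : Matrix O O ℂ, edmdLoss P Φ ψ K₁ ≤ edmdLoss P Φ ψ K₂) → K₁ = K) →
      ∀ (g : G) (o o' : O), K o o' = K (actO o g) (actO o' g)) :=
  stmt13_general P actY hYmeas actO hO1 hO2 Φ ψ hψL2 hψΦL2 hA2 hA3 hA4
end
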